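/- There exists n₀ ∈ ℕ such that for all n ≥ n₀, all a ∈ [2, 200], all b ∈ [−1000, 1000] and all r ∈ (1/2, 1]: {θ ∈ S^{n-1} : rθ ∈ T_{a,b}} = {θ ∈ S^{n-1} : ⟨θ, e₁⟩ ≤ x(a,b,r)}, where x(a,b,r) = sin(arcsin(aδ₀/r) − arcsin(aδ₀) + arcsin(δ₀(1+bδ₁))); consequently g_{T_{a,b}}(r) = Ψ(x(a,b,r)). -/

import Mathlib

open MeasureTheory Real
open scoped ENNReal

noncomputable section

abbrev Euc (n : ℕ) := EuclideanSpace ℝ (Fin n)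

/-- `D_n`, the closed unit Euclidean ball in `ℝ^n` centered at the origin. -/
def Dball (n : ℕ) : Set (Euc n) := Metric.closedBall 0 1

/-- `S^{n-1}`, the unit sphere in `ℝ^n`. -/
abbrev Sph (n : ℕ) := Metric.sphere (0 : Euc n) 1

/-- `σ`, the rotation-invariant probability measure on the sphere `S^{n-1}`
(the normalized spherical measure). -/
def sphσ (n : ℕ) : Measure (Sph n) :=
  ((volume : Measure (Euc n)).toSphere Set.univ)⁻¹ • (volume : Measure (Euc n)).toSphere

/-- The profile of a set `L ⊆ ℝ^n`: `g_L(r) = 1 − σ({θ ∈ S^{n-1} : rθ ∈ L})`. -/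
def profileFn (n : ℕ) (L : Set (Euc n)) (r : ℝ) : ℝ :=
  1 - (sphσ n {θ : Sph n | r • (θ : Euc n) ∈ L}).toReal

/-- `δ₀ = n^{-1/4}`. -/
def del0 (n : ℕ) : ℝ := (n : ℝ) ^ (-(1/4) : ℝ)

/-- `δ₁ = n^{-0.99}`. -/
def del1 (n : ℕ) : ℝ := (n : ℝ) ^ (-(0.99) : ℝ)

/-- `Ψ(x) = c_n ∫_{min(x,1)}^1 (1−t²)^{(n−3)/2} dt`, with
`c_n = (∫_{−1}^1 (1−t²)^{(n−3)/2} dt)⁻¹`: the normalized surface measure of the spherical cap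
at height `x`. -/
def Psi (n : ℕ) (x : ℝ) : ℝ :=
  (∫ t in (-1 : ℝ)..(1 : ℝ), (1 - t ^ 2) ^ (((n : ℝ) - 3) / 2))⁻¹ *
    ∫ t in (min x 1)..(1 : ℝ), (1 - t ^ 2) ^ (((n : ℝ) - 3) / 2)

/-- `f` is an affine function with negative slope. -/
def AffineNegSlope (f : ℝ → ℝ) : Prop := ∃ s c : ℝ, s < 0 ∧ ∀ x, f x = s * x + c

/-- The line `{(x, f(x))}` meets the unit circle at abscissa `δ₀(1+δ₁b)`:
`f(δ₀(1+δ₁b)) = √(1−(δ₀(1+δ₁b))²)`. -/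
def TouchesCircle (n : ℕ) (b : ℝ) (f : ℝ → ℝ) : Prop :=
  f (del0 n * (1 + del1 n * b)) = Real.sqrt (1 - (del0 n * (1 + del1 n * b)) ^ 2)

/-- The line `{(x, f(x))}` has distance `a·δ₀` from the origin:
`min_{x∈ℝ} √(x² + f(x)²) = a·δ₀`. -/
def DistFromOrigin (n : ℕ) (a : ℝ) (f : ℝ → ℝ) : Prop :=
  IsLeast {y : ℝ | ∃ x : ℝ, y = Real.sqrt (x ^ 2 + f x ^ 2)} (a * del0 n)

/-- The cone body `T_{a,b} = D_n ∩ {(x, y) ∈ ℝ × ℝ^{n−1} : |y| ≤ f(x)}`, where the first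
coordinate of `z ∈ ℝ^n` plays the role of `x` and `|y| = √(‖z‖² − z₁²)`. -/
def coneBody (n : ℕ) [NeZero n] (f : ℝ → ℝ) : Set (Euc n) :=
  Dball n ∩ {z | Real.sqrt (‖z‖ ^ 2 - (inner ℝ z (EuclideanSpace.single (0 : Fin n) (1 : ℝ)) : ℝ) ^ 2)
    ≤ f (inner ℝ z (EuclideanSpace.single (0 : Fin n) (1 : ℝ)) : ℝ)}

end
/-- `x(a,b,r) = sin(arcsin(aδ₀/r) − arcsin(aδ₀) + arcsin(δ₀(1+bδ₁)))`. -/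
noncomputable def xabr (n : ℕ) (a b r : ℝ) : ℝ :=
  Real.sin (Real.arcsin (a * del0 n / r) - Real.arcsin (a * del0 n) +
    Real.arcsin (del0 n * (1 + b * del1 n)))


/-!
Write the line `y = f x` in normal form `x cos φ + y sin φ = d`, with `d = aδ₀` its distance to
the origin. A point `rθ` with `θ₀ = cos ψ` lies under the line iff `r cos (ψ - φ) ≤ d`, i.e. iff
`ψ ≥ φ + arccos (d / r)`; the touching condition at `x₀ = δ₀(1 + bδ₁)` gives
`φ = arcsin d - arcsin x₀`. For large `n` all these angles are small, so the section of `T_{a,b}`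
at radius `r` is the complement of the cap `{θ₀ > x(a,b,r)}`.

The σ-measure of the cap `{θ₀ > x}` is the volume of the cone over it cut by the unit ball,
relative to the volume of the ball. Both are solids of revolution about `e₁`, so Cavalieri's
principle reduces them to `∫ ρ(t)^{n-1} dt` for their radius profiles `ρ`, and an integration by
parts for `∫ (1 - t²)^{(n-1)/2}` turns the ratio into `Ψ(x)`.
-/

open Set

lemma isLeast_sqrt_sq_add_sq_line (s c : ℝ) :
    IsLeast {y : ℝ | ∃ x : ℝ, y = √(x ^ 2 + (s * x + c) ^ 2)} (|c| / √(1 + s ^ 2)) := by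
  have h1s : 0 < 1 + s ^ 2 := by positivity
  have hsq : ∀ x, x ^ 2 + (s * x + c) ^ 2 =
      c ^ 2 / (1 + s ^ 2) + ((1 + s ^ 2) * x + s * c) ^ 2 / (1 + s ^ 2) := by
    intro x; field_simp; ring
  have hval : |c| / √(1 + s ^ 2) = √(c ^ 2 / (1 + s ^ 2)) := by
    rw [Real.sqrt_div (sq_nonneg c), Real.sqrt_sq_eq_abs]
  refine ⟨⟨-s * c / (1 + s ^ 2), ?_⟩, ?_⟩
  · rw [hval, hsq]; congr 1; field_simp; ring
  · rintro y ⟨x, rfl⟩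
    rw [hval, hsq]
    exact Real.sqrt_le_sqrt (le_add_of_nonneg_right (by positivity))

lemma mul_cos_add_mul_sin_arctan_add_pi_div_two (s x y : ℝ) :
    x * cos (arctan s + π / 2) + y * sin (arctan s + π / 2) = (y - s * x) / √(1 + s ^ 2) := by
  rw [cos_add_pi_div_two, sin_add_pi_div_two, cos_arctan, sin_arctan]
  ring

lemma cos_sub_le_cos_iff {ψ φ θ : ℝ} (hψ : ψ ∈ Icc 0 π) (hφ : 0 ≤ φ) (hφθ : φ < θ)
    (hθ : φ + θ ≤ π) : cos (ψ - φ) ≤ cos θ ↔ φ + θ ≤ ψ := by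
  obtain ⟨hψ0, hψπ⟩ := hψ
  have hθ' : θ ∈ Icc 0 π := ⟨by linarith, by linarith⟩
  rcases le_or_gt φ ψ with hle | hlt
  · rw [strictAntiOn_cos.le_iff_ge ⟨by linarith, by linarith⟩ hθ']
    constructor <;> intro <;> linarith
  · rw [← cos_neg, neg_sub]
    refine iff_of_false (not_le.2 (strictAntiOn_cos ⟨by linarith, by linarith⟩ hθ' ?_))
      (by linarith)
    linarith

/-- `arctan s + π / 2` is the direction of the upward unit normal of the line `y = s x + c`. -/
lemma arctan_add_pi_div_two_eq {s c d x₀ : ℝ} (hs : s < 0) (hx₀ : 0 < x₀) (hx₀d : x₀ < d)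
    (hd : 2 * d ^ 2 ≤ 1) (htouch : s * x₀ + c = √(1 - x₀ ^ 2))
    (hdist : d = c / √(1 + s ^ 2)) :
    arctan s + π / 2 = arcsin d - arcsin x₀ := by
  set φ := arctan s + π / 2 with hφ_def
  have hφ0 : 0 < φ := by linarith [neg_pi_div_two_lt_arctan s, hφ_def]
  have hφ : φ < π / 2 := by linarith [arctan_lt_zero.2 hs, hφ_def]
  have hx₀1 : x₀ ≤ 1 := by nlinarith
  have hψ₀ : arccos x₀ < π / 2 := arccos_lt_pi_div_two.2 hx₀
  have hcos : cos (arccos x₀ - φ) = d := by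
    rw [cos_sub, cos_arccos (by linarith) hx₀1, sin_arccos,
      mul_cos_add_mul_sin_arctan_add_pi_div_two, hdist, ← htouch]
    ring_nf
  have hle : φ ≤ arccos x₀ := by
    -- otherwise `d = cos (φ - arccos x₀) > sin (arccos x₀) = √(1 - x₀²) > d`
    by_contra! h
    have hlt : cos (π / 2 - arccos x₀) < cos (φ - arccos x₀) :=
      strictAntiOn_cos ⟨by linarith, by linarith [arccos_nonneg x₀, pi_pos]⟩
        ⟨by linarith, by linarith [arccos_nonneg x₀, pi_pos]⟩ (by linarith)
    rw [cos_pi_div_two_sub, sin_arccos, ← cos_neg, neg_sub, hcos] at hlt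
    nlinarith [Real.sqrt_nonneg (1 - x₀ ^ 2), Real.sq_sqrt (show 0 ≤ 1 - x₀ ^ 2 by nlinarith)]
  have hψ₀φ : arccos x₀ - φ = arccos d := by
    rw [← hcos, arccos_cos (by linarith) (by linarith [arccos_le_pi x₀])]
  rw [arccos_eq_pi_div_two_sub_arcsin, arccos_eq_pi_div_two_sub_arcsin] at hψ₀φ
  linarith

lemma sqrt_le_line_iff_le_sin {s c d x₀ r t : ℝ} (hs : s < 0) (hx₀ : 0 < x₀) (hx₀d : x₀ < d)
    (hdr : 2 * d ≤ r) (hr1 : r ≤ 1) (htouch : s * x₀ + c = √(1 - x₀ ^ 2))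
    (hdist : d = c / √(1 + s ^ 2)) (ht : t ∈ Icc (-1) 1) :
    r * √(1 - t ^ 2) ≤ s * (r * t) + c ↔ t ≤ sin (arcsin (d / r) - arcsin d + arcsin x₀) := by
  have hd : 0 < d := hx₀.trans hx₀d
  have hr : 0 < r := by linarith
  have hφ := arctan_add_pi_div_two_eq hs hx₀ hx₀d (by nlinarith) htouch hdist
  obtain ⟨φ, hφ_def⟩ : ∃ φ, φ = arctan s + π / 2 := ⟨_, rfl⟩
  rw [← hφ_def] at hφ
  have hnormal := mul_cos_add_mul_sin_arctan_add_pi_div_two s (r * t) (r * √(1 - t ^ 2))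
  rw [← hφ_def] at hnormal
  have hφ0 : 0 < φ := by linarith [neg_pi_div_two_lt_arctan s]
  have hπ := pi_pos
  have hd_le : d ≤ d / r := le_div_self hd.le hr hr1
  have hdr' : d / r ≤ 1 / 2 := by rw [div_le_iff₀ hr]; linarith
  have hα : arcsin (d / r) ≤ π / 6 :=
    (arcsin_le_iff_le_sin ⟨by linarith, by linarith⟩ ⟨by linarith, by linarith⟩).2
      (by rwa [sin_pi_div_six])
  have hβα : arcsin d ≤ arcsin (d / r) := monotone_arcsin hd_le
  have hγ : 0 < arcsin x₀ := arcsin_pos.2 hx₀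
  have hθ : arccos (d / r) = π / 2 - arcsin (d / r) := arccos_eq_pi_div_two_sub_arcsin _
  calc r * √(1 - t ^ 2) ≤ s * (r * t) + c
      ↔ r * cos (arccos t - φ) ≤ d := by
        rw [cos_sub, cos_arccos ht.1 ht.2, sin_arccos, hdist,
          show r * (t * cos φ + √(1 - t ^ 2) * sin φ) =
            r * t * cos φ + r * √(1 - t ^ 2) * sin φ by ring,
          hnormal, div_le_div_iff_of_pos_right (by positivity)]
        constructor <;> intro <;> linarith
    _ ↔ cos (arccos t - φ) ≤ cos (arccos (d / r)) := by
        rw [cos_arccos (by linarith) (by linarith), le_div_iff₀' hr]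
    _ ↔ φ + arccos (d / r) ≤ arccos t :=
        cos_sub_le_cos_iff ⟨arccos_nonneg t, arccos_le_pi t⟩ (by linarith) (by linarith)
          (by linarith)
    _ ↔ cos (arccos t) ≤ cos (φ + arccos (d / r)) :=
        (strictAntiOn_cos.le_iff_ge ⟨arccos_nonneg t, arccos_le_pi t⟩
          ⟨by linarith [arccos_nonneg (d / r)], by linarith⟩).symm
    _ ↔ t ≤ sin (arcsin (d / r) - arcsin d + arcsin x₀) := by
        rw [cos_arccos ht.1 ht.2, show φ + arccos (d / r) =
          π / 2 - (arcsin (d / r) - arcsin d + arcsin x₀) by rw [hφ, hθ]; ring,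
          cos_pi_div_two_sub]

lemma sin_arcsin_sub_arcsin_add_arcsin_mem_Ioo {x₀ d d' : ℝ} (hx₀ : 0 < x₀) (hx₀d : x₀ < d)
    (hdd' : d ≤ d') (hd' : d' ≤ 1) : sin (arcsin d' - arcsin d + arcsin x₀) ∈ Ioo 0 1 := by
  have h1 : arcsin d ≤ arcsin d' := monotone_arcsin hdd'
  have h2 : arcsin x₀ < arcsin d :=
    strictMonoOn_arcsin ⟨by linarith, by linarith⟩ ⟨by linarith, by linarith⟩ hx₀d
  have h3 : 0 < arcsin x₀ := arcsin_pos.2 hx₀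
  have h4 : arcsin d' ≤ π / 2 := arcsin_le_pi_div_two d'
  refine ⟨sin_pos_of_pos_of_lt_pi (by linarith) (by linarith), ?_⟩
  calc _ < sin (π / 2) := sin_lt_sin_of_lt_of_le_pi_div_two (by linarith) le_rfl
          (by linarith)
    _ = 1 := sin_pi_div_two

lemma sqrt_pow_eq_rpow {a : ℝ} (ha : 0 ≤ a) (m : ℕ) : √a ^ m = a ^ ((m : ℝ) / 2) := by
  rw [sqrt_eq_rpow, ← rpow_mul_natCast ha]
  ring_nf

lemma hasDerivAt_mul_one_sub_sq_rpow {p : ℝ} (hp : 2 ≤ p) (t : ℝ) :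
    HasDerivAt (fun t ↦ t * (1 - t ^ 2) ^ (p / 2))
      ((p + 1) * (1 - t ^ 2) ^ (p / 2) - p * (1 - t ^ 2) ^ ((p - 2) / 2)) t := by
  have hinner : HasDerivAt (fun t : ℝ ↦ 1 - t ^ 2) (-(2 * t)) t := by
    simpa using (hasDerivAt_pow 2 t).const_sub 1
  have h := (hasDerivAt_id' t).mul (hinner.rpow_const (p := p / 2) (Or.inr (by linarith)))
  have hsplit : (1 - t ^ 2) ^ (p / 2) = (1 - t ^ 2) ^ ((p - 2) / 2) * (1 - t ^ 2) := by
    rcases eq_or_ne (1 - t ^ 2) 0 with h0 | h0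
    · rw [h0, mul_zero, zero_rpow (by linarith)]
    · rw [← rpow_add_one h0]; ring_nf
  refine h.congr_deriv ?_
  rw [show p / 2 - 1 = (p - 2) / 2 by ring, hsplit]
  ring

lemma continuous_one_sub_sq_rpow {q : ℝ} (hq : 0 ≤ q) : Continuous fun t : ℝ ↦ (1 - t ^ 2) ^ q :=
  (continuous_const.sub (continuous_pow 2)).rpow_const fun _ ↦ Or.inr hq

lemma integral_one_sub_sq_rpow_recurrence {p : ℝ} (hp : 2 ≤ p) (x : ℝ) :
    (p + 1) * ∫ t in x..1, (1 - t ^ 2) ^ (p / 2) =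
      p * (∫ t in x..1, (1 - t ^ 2) ^ ((p - 2) / 2)) - x * (1 - x ^ 2) ^ (p / 2) := by
  have h₁ : IntervalIntegrable (fun t : ℝ ↦ (p + 1) * (1 - t ^ 2) ^ (p / 2)) volume x 1 :=
    ((continuous_one_sub_sq_rpow (by linarith)).intervalIntegrable x 1).const_mul _
  have h₂ : IntervalIntegrable (fun t : ℝ ↦ p * (1 - t ^ 2) ^ ((p - 2) / 2)) volume x 1 :=
    ((continuous_one_sub_sq_rpow (by linarith)).intervalIntegrable x 1).const_mul _
  have hFTC := intervalIntegral.integral_eq_sub_of_hasDerivAt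
    (fun t _ ↦ hasDerivAt_mul_one_sub_sq_rpow hp t) (h₁.sub h₂)
  rw [intervalIntegral.integral_sub h₁ h₂, intervalIntegral.integral_const_mul,
    intervalIntegral.integral_const_mul] at hFTC
  norm_num [zero_rpow (show p / 2 ≠ 0 by linarith)] at hFTC
  linarith

lemma integral_sqrt_one_sub_sq_pow {m : ℕ} (hm : 2 ≤ m) {x : ℝ} (hx : x ∈ Icc (-1) 1) :
    (m + 1) * ∫ t in x..1, √(1 - t ^ 2) ^ m =
      m * (∫ t in x..1, (1 - t ^ 2) ^ (((m : ℝ) - 2) / 2)) - x * √(1 - x ^ 2) ^ m := by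
  have hsq : ∀ t ∈ Icc (-1 : ℝ) 1, 0 ≤ 1 - t ^ 2 := fun t ht ↦ by nlinarith [ht.1, ht.2]
  rw [sqrt_pow_eq_rpow (hsq x hx), ← integral_one_sub_sq_rpow_recurrence (by exact_mod_cast hm)]
  congr 1
  refine intervalIntegral.integral_congr fun t ht ↦ sqrt_pow_eq_rpow (hsq t ?_) m
  rw [uIcc_of_le hx.2] at ht
  exact ⟨hx.1.trans ht.1, ht.2⟩

lemma integral_Ioo_sqrt_one_sub_sq_pow {m : ℕ} (hm : 2 ≤ m) :
    (m + 1) * ∫ t in Ioo (-1 : ℝ) 1, √(1 - t ^ 2) ^ m =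
      m * ∫ t in (-1 : ℝ)..1, (1 - t ^ 2) ^ (((m : ℝ) - 2) / 2) := by
  rw [← integral_Ioc_eq_integral_Ioo, ← intervalIntegral.integral_of_le (by norm_num),
    integral_sqrt_one_sub_sq_pow hm ⟨le_rfl, by norm_num⟩]
  norm_num [zero_pow (show m ≠ 0 by omega)]

lemma mul_le_sqrt_one_sub_sq_iff {x t : ℝ} (hx : x ∈ Ioo 0 1) (ht : t ∈ Icc 0 1) :
    t * (√(1 - x ^ 2) / x) ≤ √(1 - t ^ 2) ↔ t ≤ x := by
  obtain ⟨hx0, hx1⟩ := hx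
  obtain ⟨ht0, ht1⟩ := ht
  rw [le_sqrt (by positivity) (by nlinarith), mul_pow, div_pow, sq_sqrt (by nlinarith),
    mul_div_assoc', div_le_iff₀ (by positivity), ← pow_le_pow_iff_left₀ ht0 hx0.le two_ne_zero]
  constructor <;> intro h <;> nlinarith

/-- `min (t k) √(1 - t²)` is the radius at height `t` of the cone over the cap `{x < θ₀}` cut by
the unit ball. -/
lemma integral_Ioo_min_pow {m : ℕ} (hm : 2 ≤ m) {x : ℝ} (hx : x ∈ Ioo 0 1) :
    (m + 1) * ∫ t in Ioo (0 : ℝ) 1, min (t * (√(1 - x ^ 2) / x)) √(1 - t ^ 2) ^ m =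
      m * ∫ t in x..1, (1 - t ^ 2) ^ (((m : ℝ) - 2) / 2) := by
  set k := √(1 - x ^ 2) / x with hk
  have hg : Continuous fun t ↦ min (t * k) √(1 - t ^ 2) ^ m := by fun_prop
  have hleft :
      ∫ t in (0 : ℝ)..x, min (t * k) √(1 - t ^ 2) ^ m = ∫ t in (0 : ℝ)..x, t ^ m * k ^ m := by
    refine intervalIntegral.integral_congr fun t ht ↦ ?_
    rw [uIcc_of_le hx.1.le] at ht
    rw [min_eq_left ((mul_le_sqrt_one_sub_sq_iff hx ⟨ht.1, ht.2.trans hx.2.le⟩).2 ht.2), mul_pow]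
  have hright : ∫ t in x..1, min (t * k) √(1 - t ^ 2) ^ m = ∫ t in x..1, √(1 - t ^ 2) ^ m := by
    refine intervalIntegral.integral_congr_ae (Filter.Eventually.of_forall fun t ht ↦ ?_)
    rw [uIoc_of_le hx.2.le] at ht
    rw [min_eq_right (not_le.1 fun h ↦ ?_).le]
    exact (not_le.2 ht.1) ((mul_le_sqrt_one_sub_sq_iff hx ⟨(hx.1.trans ht.1).le, ht.2⟩).1 h)
  have hxk : x * k = √(1 - x ^ 2) := by rw [hk]; field_simp [hx.1.ne']
  rw [← integral_Ioc_eq_integral_Ioo, ← intervalIntegral.integral_of_le zero_le_one,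
    ← intervalIntegral.integral_add_adjacent_intervals (hg.intervalIntegrable 0 x)
      (hg.intervalIntegrable x 1), hleft, hright, mul_add,
    integral_sqrt_one_sub_sq_pow hm ⟨by linarith [hx.1], hx.2.le⟩,
    intervalIntegral.integral_mul_const, integral_pow, ← hxk]
  field_simp
  ring

lemma sq_apply_le_sq_norm {n : ℕ} (z : Euc n) (i : Fin n) : z i ^ 2 ≤ ‖z‖ ^ 2 := by
  have h := PiLp.norm_apply_le z i
  rw [Real.norm_eq_abs] at h
  exact sq_le_sq.2 (by rwa [abs_norm])

def headTailEquiv (m : ℕ) : Euc (m + 1) ≃ᵐ ℝ × Euc m :=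
  ((MeasurableEquiv.toLp 2 (Fin (m + 1) → ℝ)).symm.trans
    (MeasurableEquiv.piFinSuccAbove (fun _ ↦ ℝ) 0)).trans
    (MeasurableEquiv.prodCongr (MeasurableEquiv.refl ℝ) (MeasurableEquiv.toLp 2 (Fin m → ℝ)))

lemma measurePreserving_headTailEquiv (m : ℕ) : MeasurePreserving (headTailEquiv m) := by
  have hsnd : MeasurePreserving (Prod.map id (MeasurableEquiv.toLp 2 (Fin m → ℝ)))
      (volume : Measure (ℝ × (Fin m → ℝ))) volume := by
    rw [Measure.volume_eq_prod, Measure.volume_eq_prod]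
    exact (MeasurePreserving.id volume).prod
      (EuclideanSpace.volume_preserving_symm_measurableEquiv_toLp (Fin m)).symm
  exact (hsnd.comp (volume_preserving_piFinSuccAbove (fun _ ↦ ℝ) 0)).comp
    (EuclideanSpace.volume_preserving_symm_measurableEquiv_toLp _)

lemma headTailEquiv_fst (m : ℕ) (z : Euc (m + 1)) : (headTailEquiv m z).1 = z 0 := rfl

lemma norm_headTailEquiv_snd (m : ℕ) (z : Euc (m + 1)) :
    ‖(headTailEquiv m z).2‖ = √(‖z‖ ^ 2 - z 0 ^ 2) := by
  have hsnd : ∀ j : Fin m, (headTailEquiv m z).2 j = z j.succ := fun j ↦ rfl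
  rw [eq_comm, sqrt_eq_iff_eq_sq (by linarith [sq_apply_le_sq_norm z 0]) (norm_nonneg _),
    EuclideanSpace.norm_sq_eq, EuclideanSpace.norm_sq_eq, Fin.sum_univ_succ]
  simp [hsnd]

/-- Cavalieri's principle for a solid of revolution about the first axis. -/
lemma volume_setOf_sqrt_lt {m : ℕ} [NeZero m] {A : Set ℝ} (hA : MeasurableSet A) {g : ℝ → ℝ}
    (hg : Measurable g) (hg0 : ∀ t ∈ A, 0 ≤ g t) (hint : IntegrableOn (fun t ↦ g t ^ m) A) :
    volume {z : Euc (m + 1) | z 0 ∈ A ∧ √(‖z‖ ^ 2 - z 0 ^ 2) < g (z 0)} =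
      ENNReal.ofReal (∫ t in A, g t ^ m) * volume (Metric.ball (0 : Euc m) 1) := by
  set W : Set (ℝ × Euc m) := {p | p.1 ∈ A ∧ ‖p.2‖ < g p.1}
  have hW : MeasurableSet W :=
    (measurable_fst hA).inter (measurableSet_lt measurable_snd.norm (hg.comp measurable_fst))
  have hpre : {z : Euc (m + 1) | z 0 ∈ A ∧ √(‖z‖ ^ 2 - z 0 ^ 2) < g (z 0)} =
      headTailEquiv m ⁻¹' W := by
    ext z
    simp only [mem_ofPred_eq, mem_preimage, W, headTailEquiv_fst, norm_headTailEquiv_snd]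
  have hslice : ∀ t, volume (Prod.mk t ⁻¹' W) =
      A.indicator (fun t ↦ ENNReal.ofReal (g t ^ m) * volume (Metric.ball (0 : Euc m) 1)) t := by
    intro t
    by_cases ht : t ∈ A
    · have hball := Measure.addHaar_ball volume (0 : Euc m) (hg0 t ht)
      rw [finrank_euclideanSpace_fin] at hball
      rw [indicator_of_mem ht, ← hball]
      congr 1
      ext y
      simp [W, ht]
    · rw [indicator_of_notMem ht]
      simp [W, ht]
  rw [hpre, (measurePreserving_headTailEquiv m).measure_preimage hW.nullMeasurableSet,
    Measure.volume_eq_prod, Measure.prod_apply hW, lintegral_congr hslice,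
    lintegral_indicator hA, lintegral_mul_const _ (by fun_prop),
    ofReal_integral_eq_lintegral_ofReal hint ((ae_restrict_iff' hA).2
      (Filter.Eventually.of_forall fun t ht ↦ pow_nonneg (hg0 t ht) m))]

lemma sqrt_sq_sub_sq_lt_sqrt_one_sub_sq_iff {t N : ℝ} (htN : t ^ 2 ≤ N ^ 2) (hN : 0 ≤ N) :
    √(N ^ 2 - t ^ 2) < √(1 - t ^ 2) ↔ N < 1 := by
  rw [sqrt_lt_sqrt_iff (by linarith)]
  constructor <;> intro h <;> nlinarith

lemma lt_one_iff_sqrt_lt {t N : ℝ} (htN : t ^ 2 ≤ N ^ 2) (hN : 0 ≤ N) :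
    N < 1 ↔ t ∈ Ioo (-1) 1 ∧ √(N ^ 2 - t ^ 2) < √(1 - t ^ 2) := by
  rw [sqrt_sq_sub_sq_lt_sqrt_one_sub_sq_iff htN hN]
  have htN' := abs_le_of_sq_le_sq' htN hN
  exact ⟨fun h ↦ ⟨⟨by linarith [htN'.1], by linarith [htN'.2]⟩, h⟩, And.right⟩

lemma lt_mul_iff_sqrt_lt_min {x t N : ℝ} (hx : x ∈ Ioo 0 1) (htN : t ^ 2 ≤ N ^ 2) (hN : 0 ≤ N) :
    N ∈ Ioo 0 1 ∧ x * N < t ↔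
      t ∈ Ioo 0 1 ∧ √(N ^ 2 - t ^ 2) < min (t * (√(1 - x ^ 2) / x)) √(1 - t ^ 2) := by
  obtain ⟨hx0, hx1⟩ := hx
  have htN' := abs_le_of_sq_le_sq' htN hN
  have hcone : 0 < t → (√(N ^ 2 - t ^ 2) < t * (√(1 - x ^ 2) / x) ↔ x * N < t) := by
    intro ht
    rw [sqrt_lt' (mul_pos ht (div_pos (sqrt_pos.2 (by nlinarith)) hx0)), mul_pow, div_pow,
      sq_sqrt (by nlinarith), mul_div_assoc', lt_div_iff₀ (by positivity),
      ← pow_lt_pow_iff_left₀ (by positivity) ht.le two_ne_zero]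
    constructor <;> intro h <;> nlinarith
  rw [lt_min_iff, sqrt_sq_sub_sq_lt_sqrt_one_sub_sq_iff htN hN]
  constructor
  · rintro ⟨⟨hN0, hN1⟩, hxN⟩
    have ht : 0 < t := (mul_pos hx0 hN0).trans hxN
    exact ⟨⟨ht, by linarith [htN'.2]⟩, (hcone ht).2 hxN, hN1⟩
  · rintro ⟨⟨ht, -⟩, hxN, hN1⟩
    exact ⟨⟨by linarith [htN'.2], hN1⟩, (hcone ht).1 hxN⟩

open scoped Pointwise in
lemma Ioo_smul_image_setOf_lt_apply {n : ℕ} (i : Fin n) (x : ℝ) :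
    Ioo (0 : ℝ) 1 • (Subtype.val '' {θ : Sph n | x < (θ : Euc n) i}) =
      {z : Euc n | ‖z‖ ∈ Ioo 0 1 ∧ x * ‖z‖ < z i} := by
  ext z
  simp only [mem_smul, mem_image, mem_ofPred_eq]
  constructor
  · rintro ⟨r, hr, _, ⟨θ, hθ, rfl⟩, rfl⟩
    have hnorm : ‖r • (θ : Euc n)‖ = r := by
      rw [norm_smul, norm_eq_of_mem_sphere θ, mul_one, Real.norm_of_nonneg hr.1.le]
    rw [hnorm, PiLp.smul_apply, smul_eq_mul, mul_comm x]
    exact ⟨hr, mul_lt_mul_of_pos_left hθ hr.1⟩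
  · rintro ⟨hz, hxz⟩
    have hz0 : ‖z‖ ≠ 0 := hz.1.ne'
    refine ⟨‖z‖, hz, _, ⟨⟨‖z‖⁻¹ • z, ?_⟩, ?_, rfl⟩, smul_inv_smul₀ hz0 z⟩
    · rw [mem_sphere_zero_iff_norm, norm_smul, norm_inv, norm_norm, inv_mul_cancel₀ hz0]
    · rw [PiLp.smul_apply, smul_eq_mul, lt_inv_mul_iff₀ hz.1, mul_comm]
      exact hxz

lemma toSphere_univ_eq (m : ℕ) [NeZero m] :
    volume.toSphere (univ : Set (Sph (m + 1))) = (m + 1 : ℕ) *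
      (ENNReal.ofReal (∫ t in Ioo (-1 : ℝ) 1, √(1 - t ^ 2) ^ m) *
        volume (Metric.ball (0 : Euc m) 1)) := by
  have hball : Metric.ball (0 : Euc (m + 1)) 1 =
      {z | z 0 ∈ Ioo (-1) 1 ∧ √(‖z‖ ^ 2 - z 0 ^ 2) < √(1 - z 0 ^ 2)} := by
    ext z
    rw [mem_ball_zero_iff, mem_ofPred_eq]
    exact lt_one_iff_sqrt_lt (sq_apply_le_sq_norm z 0) (norm_nonneg z)
  have hcont : Continuous fun t : ℝ ↦ √(1 - t ^ 2) := by fun_prop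
  rw [Measure.toSphere_apply_univ, finrank_euclideanSpace_fin, hball,
    volume_setOf_sqrt_lt measurableSet_Ioo hcont.measurable (fun _ _ ↦ sqrt_nonneg _)
      ((hcont.pow m).integrableOn_Icc.mono_set Ioo_subset_Icc_self)]

open scoped Pointwise in
lemma toSphere_setOf_lt_apply_zero {m : ℕ} [NeZero m] {x : ℝ} (hx : x ∈ Ioo 0 1) :
    volume.toSphere {θ : Sph (m + 1) | x < (θ : Euc (m + 1)) 0} = (m + 1 : ℕ) *
      (ENNReal.ofReal (∫ t in Ioo (0 : ℝ) 1, min (t * (√(1 - x ^ 2) / x)) √(1 - t ^ 2) ^ m) *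
        volume (Metric.ball (0 : Euc m) 1)) := by
  have hcone : Ioo (0 : ℝ) 1 • (Subtype.val '' {θ : Sph (m + 1) | x < (θ : Euc (m + 1)) 0}) =
      {z | z 0 ∈ Ioo 0 1 ∧
        √(‖z‖ ^ 2 - z 0 ^ 2) < min (z 0 * (√(1 - x ^ 2) / x)) √(1 - z 0 ^ 2)} := by
    rw [Ioo_smul_image_setOf_lt_apply]
    ext z
    exact lt_mul_iff_sqrt_lt_min hx (sq_apply_le_sq_norm z 0) (norm_nonneg z)
  have hcont : Continuous fun t : ℝ ↦ min (t * (√(1 - x ^ 2) / x)) √(1 - t ^ 2) := by fun_prop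
  have hmeas : MeasurableSet {θ : Sph (m + 1) | x < (θ : Euc (m + 1)) 0} :=
    measurableSet_lt measurable_const (by fun_prop)
  rw [Measure.toSphere_apply' _ hmeas, finrank_euclideanSpace_fin, hcone,
    volume_setOf_sqrt_lt measurableSet_Ioo hcont.measurable
      (fun t ht ↦ le_min (mul_nonneg ht.1.le (div_nonneg (sqrt_nonneg _) hx.1.le)) (sqrt_nonneg _))
      ((hcont.pow m).integrableOn_Icc.mono_set Ioo_subset_Icc_self)]

lemma sphσ_apply (n : ℕ) (S : Set (Sph n)) :
    sphσ n S =
      (volume : Measure (Euc n)).toSphere S / (volume : Measure (Euc n)).toSphere univ := by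
  rw [sphσ, Measure.smul_apply, smul_eq_mul, ENNReal.div_eq_inv_mul]

instance (n : ℕ) [NeZero n] : IsProbabilityMeasure (sphσ n) := by
  have h0 : (volume : Measure (Euc n)).toSphere univ ≠ 0 := by
    rw [Measure.toSphere_apply_univ, finrank_euclideanSpace_fin]
    exact mul_ne_zero (by exact_mod_cast NeZero.ne n) (Metric.measure_ball_pos _ _ one_pos).ne'
  exact ⟨by rw [sphσ_apply, ENNReal.div_self h0 (measure_ne_top _ _)]⟩

theorem toReal_sphσ_setOf_lt_apply_zero {n : ℕ} [NeZero n] (hn : 3 ≤ n) {x : ℝ}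
    (hx : x ∈ Ioo 0 1) : (sphσ n {θ : Sph n | x < (θ : Euc n) 0}).toReal = Psi n x := by
  obtain ⟨m, rfl⟩ : ∃ m, n = m + 1 := ⟨n - 1, by omega⟩
  have hm : 2 ≤ m := by omega
  have : NeZero m := ⟨by omega⟩
  have hm' : (2 : ℝ) ≤ m := by exact_mod_cast hm
  have hcap := integral_Ioo_min_pow hm hx
  have huniv := integral_Ioo_sqrt_one_sub_sq_pow hm
  have hW : 0 < ∫ t in (-1 : ℝ)..1, (1 - t ^ 2) ^ (((m : ℝ) - 2) / 2) :=
    intervalIntegral.intervalIntegral_pos_of_pos_on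
      ((continuous_one_sub_sq_rpow (by linarith)).intervalIntegrable _ _)
      (fun t ht ↦ rpow_pos_of_pos (by nlinarith [ht.1, ht.2]) _) (by norm_num)
  rw [sphσ_apply, toSphere_setOf_lt_apply_zero hx, toSphere_univ_eq,
    ENNReal.mul_div_mul_left _ _ (by simp) (by simp),
    ENNReal.mul_div_mul_right _ _ (Metric.measure_ball_pos _ _ one_pos).ne'
      measure_ball_lt_top.ne,
    ENNReal.toReal_div, ENNReal.toReal_ofReal, ENNReal.toReal_ofReal, Psi, min_eq_left hx.2.le,
    show (((m + 1 : ℕ) : ℝ) - 3) / 2 = ((m : ℝ) - 2) / 2 by push_cast; ring]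
  · have hm1 : (m : ℝ) + 1 ≠ 0 := by positivity
    rw [mul_comm, ← eq_div_iff_mul_eq hm1] at hcap huniv
    rw [hcap, huniv]
    field_simp
  · exact setIntegral_nonneg measurableSet_Ioo fun t _ ↦ pow_nonneg (sqrt_nonneg _) m
  · exact setIntegral_nonneg measurableSet_Ioo fun t ht ↦
      pow_nonneg
        (le_min (mul_nonneg ht.1.le (div_nonneg (sqrt_nonneg _) hx.1.le)) (sqrt_nonneg _)) m

lemma del0_pos {n : ℕ} (hn : 1 ≤ n) : 0 < del0 n :=
  rpow_pos_of_pos (by exact_mod_cast hn) _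

lemma del1_le_del0 {n : ℕ} (hn : 1 ≤ n) : del1 n ≤ del0 n :=
  rpow_le_rpow_of_exponent_le (by exact_mod_cast hn) (by norm_num)

lemma del0_le {n : ℕ} (hn : 10 ^ 16 ≤ n) : del0 n ≤ 1 / 10 ^ 4 := by
  have hn' : (10 : ℝ) ^ 16 ≤ n := by exact_mod_cast hn
  rw [del0, rpow_neg (by positivity), one_div ((10 : ℝ) ^ 4)]
  refine inv_anti₀ (by positivity : (0 : ℝ) < 10 ^ 4) ?_
  calc (10 : ℝ) ^ 4 = ((10 : ℝ) ^ 16) ^ (1 / 4 : ℝ) := by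
        rw [← rpow_natCast, ← rpow_natCast, ← rpow_mul (by norm_num)]; norm_num
    _ ≤ (n : ℝ) ^ (1 / 4 : ℝ) := rpow_le_rpow (by positivity) hn' (by norm_num)

lemma del0_mul_one_add_del1_mul_mem_Ioo {n : ℕ} (hn : 10 ^ 16 ≤ n) {a b : ℝ} (ha : 2 ≤ a)
    (hb : |b| ≤ 1000) : del0 n * (1 + del1 n * b) ∈ Ioo 0 (a * del0 n) := by
  have hδ₀ : 0 < del0 n := del0_pos (by omega)
  have hδ₁ : 0 < del1 n := rpow_pos_of_pos (by norm_cast; omega) _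
  have hδ₁b : |del1 n * b| ≤ 1 / 10 := by
    rw [abs_mul, abs_of_pos hδ₁]
    calc del1 n * |b| ≤ 1 / 10 ^ 4 * 1000 :=
          mul_le_mul ((del1_le_del0 (by omega)).trans (del0_le hn)) hb (abs_nonneg b)
            (by norm_num)
      _ = 1 / 10 := by norm_num
  obtain ⟨hlo, hhi⟩ := abs_le.1 hδ₁b
  exact ⟨mul_pos hδ₀ (by linarith), by nlinarith⟩

lemma inner_single_zero {n : ℕ} [NeZero n] (z : Euc n) :
    inner ℝ z (EuclideanSpace.single (0 : Fin n) (1 : ℝ)) = z 0 := by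
  simp [EuclideanSpace.inner_single_right]

lemma smul_mem_coneBody_iff {n : ℕ} [NeZero n] {f : ℝ → ℝ} {r : ℝ} (hr : 0 < r) (θ : Sph n) :
    r • (θ : Euc n) ∈ coneBody n f ↔
      r ≤ 1 ∧ r * √(1 - (θ : Euc n) 0 ^ 2) ≤ f (r * (θ : Euc n) 0) := by
  have hnorm : ‖r • (θ : Euc n)‖ = r := by
    rw [norm_smul, norm_eq_of_mem_sphere θ, mul_one, Real.norm_of_nonneg hr.le]
  simp only [coneBody, Dball, mem_inter_iff, Metric.mem_closedBall, dist_zero_right, mem_ofPred_eq,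
    inner_single_zero, hnorm, PiLp.smul_apply, smul_eq_mul]
  rw [show r ^ 2 - (r * (θ : Euc n) 0) ^ 2 = r ^ 2 * (1 - (θ : Euc n) 0 ^ 2) by ring,
    sqrt_mul (sq_nonneg r), sqrt_sq hr.le]

lemma apply_zero_mem_Icc {n : ℕ} [NeZero n] (θ : Sph n) : (θ : Euc n) 0 ∈ Icc (-1) 1 := by
  have h := sq_apply_le_sq_norm (θ : Euc n) 0
  rw [norm_eq_of_mem_sphere θ, one_pow] at h
  exact ⟨by nlinarith, by nlinarith⟩

lemma setOf_smul_mem_coneBody_eq {n : ℕ} [NeZero n] {f : ℝ → ℝ} {s c d x₀ r : ℝ} (hs : s < 0)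
    (hf : ∀ x, f x = s * x + c) (hx₀ : 0 < x₀) (hx₀d : x₀ < d) (hdr : 2 * d ≤ r) (hr1 : r ≤ 1)
    (htouch : f x₀ = √(1 - x₀ ^ 2)) (hdist : d = c / √(1 + s ^ 2)) :
    {θ : Sph n | r • (θ : Euc n) ∈ coneBody n f} =
      {θ : Sph n | (θ : Euc n) 0 ≤ sin (arcsin (d / r) - arcsin d + arcsin x₀)} := by
  rw [hf] at htouch
  ext θ
  rw [mem_ofPred_eq, smul_mem_coneBody_iff (by linarith [hx₀.trans hx₀d]) θ, hf, mem_ofPred_eq,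
    sqrt_le_line_iff_le_sin hs hx₀ hx₀d hdr hr1 htouch hdist (apply_zero_mem_Icc θ)]
  exact and_iff_right hr1

lemma profileFn_eq_Psi {n : ℕ} [NeZero n] (hn : 3 ≤ n) {L : Set (Euc n)} {r x : ℝ}
    (hL : {θ : Sph n | r • (θ : Euc n) ∈ L} = {θ : Sph n | (θ : Euc n) 0 ≤ x})
    (hx : x ∈ Ioo 0 1) : profileFn n L r = Psi n x := by
  have hcompl : {θ : Sph n | (θ : Euc n) 0 ≤ x} = {θ : Sph n | x < (θ : Euc n) 0}ᶜ := by
    ext θ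
    simp [not_lt]
  rw [profileFn, hL, hcompl, ← measureReal_def, probReal_compl_eq_one_sub
    (measurableSet_lt measurable_const (by fun_prop)), measureReal_def,
    toReal_sphσ_setOf_lt_apply_zero hn hx, sub_sub_cancel]

/-- There exists `n₀ ∈ ℕ` such that for all `n ≥ n₀`, all `a ∈ [2, 200]`, all
`b ∈ [−1000, 1000]` and all `r ∈ (1/2, 1]`:
`{θ ∈ S^{n-1} : rθ ∈ T_{a,b}} = {θ : ⟨θ, e₁⟩ ≤ x(a,b,r)}`; consequently
`g_{T_{a,b}}(r) = Ψ(x(a,b,r))`. -/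
theorem statement19 :
    ∃ n₀ : ℕ, ∀ (n : ℕ) [NeZero n], n₀ ≤ n →
      ∀ a ∈ Set.Icc (2 : ℝ) 200, ∀ b ∈ Set.Icc (-1000 : ℝ) 1000,
        ∀ f : ℝ → ℝ, AffineNegSlope f → TouchesCircle n b f → DistFromOrigin n a f →
          ∀ r : ℝ, 1 / 2 < r → r ≤ 1 →
            {θ : Sph n | r • (θ : Euc n) ∈ coneBody n f} =
              {θ : Sph n |
                (inner ℝ (θ : Euc n) (EuclideanSpace.single (0 : Fin n) (1 : ℝ)) : ℝ) ≤
                  xabr n a b r} ∧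
            profileFn n (coneBody n f) r = Psi n (xabr n a b r) := by
  refine ⟨10 ^ 16, fun n _ hn a ha b hb f ⟨s, c, hs, hf⟩ htc hdo r hr hr1 ↦ ?_⟩
  set x₀ := del0 n * (1 + del1 n * b)
  obtain ⟨hx₀, hx₀d⟩ := del0_mul_one_add_del1_mul_mem_Ioo hn ha.1 (abs_le.2 hb)
  have hd : a * del0 n ≤ 1 / 50 := by nlinarith [ha.2, del0_le hn, del0_pos (n := n) (by omega)]
  have hc : 0 < c := by
    have htouch : s * x₀ + c = √(1 - x₀ ^ 2) := (hf x₀).symm.trans htc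
    nlinarith [sqrt_nonneg (1 - x₀ ^ 2)]
  have hdist : a * del0 n = c / √(1 + s ^ 2) := by
    rw [← abs_of_pos hc]
    exact hdo.unique (by simpa only [hf] using isLeast_sqrt_sq_add_sq_line s c)
  have hX : xabr n a b r = sin (arcsin (a * del0 n / r) - arcsin (a * del0 n) + arcsin x₀) := by
    rw [xabr, mul_comm b]
  have hset := setOf_smul_mem_coneBody_eq hs hf hx₀ hx₀d (by linarith) hr1 htc hdist (n := n)
  rw [← hX] at hset
  have hXmem : xabr n a b r ∈ Ioo 0 1 := hX ▸ sin_arcsin_sub_arcsin_add_arcsin_mem_Ioo hx₀ hx₀d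
    (le_div_self (by linarith) (by linarith) hr1) ((div_le_one (by linarith)).2 (by linarith))
  exact ⟨by simpa only [inner_single_zero] using hset, profileFn_eq_Psi (by omega) hset hXmem⟩
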